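/- Let f:[a,b]→ℝ be convex. Then (b−a)/2 · [f((3a+b)/4) + f((a+3b)/4)] ≤ ∫_a^b f(t) dt ≤ (b−a)/4 · [f(a) + 2f((a+b)/2) + f(b)]. -/

import Mathlib

/-!
Both inequalities come from pairing each point `t` of an interval `[c, d]` with its mirror image
`c + d - t`: convexity gives `2 f((c+d)/2) ≤ f t + f (c+d-t) ≤ f c + f d`, and integrating over
`[c, d]` yields the classical Hermite–Hadamard bounds
`(d - c) f((c+d)/2) ≤ ∫ f ≤ (d - c) (f c + f d) / 2`. Applying these on the two halves of
`[a, b]` and adding gives the refined bounds.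
-/

open MeasureTheory Set

section Reflection

variable {E : Type*} [NormedAddCommGroup E] {f : ℝ → E} {c d : ℝ}

lemma IntervalIntegrable.comp_add_sub (hf : IntervalIntegrable f volume c d) :
    IntervalIntegrable (fun t ↦ f (c + d - t)) volume c d := by
  simpa using (hf.comp_sub_left (c + d)).symm

lemma intervalIntegral.integral_add_comp_add_sub [NormedSpace ℝ E]
    (hf : IntervalIntegrable f volume c d) :
    ∫ t in c..d, (f t + f (c + d - t)) = (2 : ℝ) • ∫ t in c..d, f t := by
  rw [intervalIntegral.integral_add hf hf.comp_add_sub, intervalIntegral.integral_comp_sub_left,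
    two_smul]
  simp

end Reflection

namespace ConvexOn

variable {f : ℝ → ℝ} {c d x : ℝ}

lemma two_mul_map_midpoint_le_add_reflect (hf : ConvexOn ℝ (Icc c d) f) (hx : x ∈ Icc c d) :
    2 * f ((c + d) / 2) ≤ f x + f (c + d - x) := by
  have hx' : c + d - x ∈ Icc c d := ⟨by linarith [hx.2], by linarith [hx.1]⟩
  have h := hf.2 hx hx' (by norm_num : (0 : ℝ) ≤ 1 / 2) (by norm_num : (0 : ℝ) ≤ 1 / 2)
    (by norm_num)
  simp only [smul_eq_mul] at h
  rw [show 1 / 2 * x + 1 / 2 * (c + d - x) = (c + d) / 2 by ring] at h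
  linarith

lemma add_reflect_le_add (hf : ConvexOn ℝ (Icc c d) f) (hx : x ∈ Icc c d) :
    f x + f (c + d - x) ≤ f c + f d := by
  have hcd : c ≤ d := hx.1.trans hx.2
  obtain ⟨θ, μ, hθ, hμ, hθμ, rfl⟩ : x ∈ segment ℝ c d := by rwa [segment_eq_Icc hcd]
  have hc : c ∈ Icc c d := left_mem_Icc.2 hcd
  have hd : d ∈ Icc c d := right_mem_Icc.2 hcd
  have h₁ := hf.2 hc hd hθ hμ hθμ
  have h₂ := hf.2 hc hd hμ hθ (by linarith)
  simp only [smul_eq_mul] at h₁ h₂ ⊢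
  rw [show c + d - (θ * c + μ * d) = μ * c + θ * d by linear_combination -(c + d) * hθμ]
  linear_combination h₁ + h₂ + (f c + f d) * hθμ

lemma abs_le_of_mem_Icc (hf : ConvexOn ℝ (Icc c d) f) (hx : x ∈ Icc c d) :
    |f x| ≤ |f c| + |f d| + 2 * |f ((c + d) / 2)| := by
  have hcd : c ≤ d := hx.1.trans hx.2
  have hmax : ∀ y ∈ Icc c d, f y ≤ max (f c) (f d) := fun y hy ↦
    hf.le_max_of_mem_segment (left_mem_Icc.2 hcd) (right_mem_Icc.2 hcd)
      (by rwa [segment_eq_Icc hcd])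
  have hx' : c + d - x ∈ Icc c d := ⟨by linarith [hx.2], by linarith [hx.1]⟩
  have hmid := hf.two_mul_map_midpoint_le_add_reflect hx
  have hmax_le : max (f c) (f d) ≤ |f c| + |f d| :=
    max_le (by linarith [le_abs_self (f c), abs_nonneg (f d)])
      (by linarith [le_abs_self (f d), abs_nonneg (f c)])
  rw [abs_le]
  constructor <;>
    linarith [hmax x hx, hmax _ hx', neg_abs_le (f ((c + d) / 2)), abs_nonneg (f ((c + d) / 2))]

lemma intervalIntegrable (hf : ConvexOn ℝ (Icc c d) f) (hcd : c ≤ d) :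
    IntervalIntegrable f volume c d := by
  rw [intervalIntegrable_iff_integrableOn_Ioo_of_le hcd]
  have hcont : ContinuousOn f (Ioo c d) := by simpa using hf.continuousOn_interior
  refine .of_bound measure_Ioo_lt_top (hcont.aestronglyMeasurable measurableSet_Ioo)
    (|f c| + |f d| + 2 * |f ((c + d) / 2)|) ?_
  filter_upwards [ae_restrict_mem measurableSet_Ioo] with y hy
  exact hf.abs_le_of_mem_Icc (Ioo_subset_Icc_self hy)

theorem mul_map_midpoint_le_integral (hf : ConvexOn ℝ (Icc c d) f) (hcd : c ≤ d) :
    (d - c) * f ((c + d) / 2) ≤ ∫ t in c..d, f t := by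
  have hint := hf.intervalIntegrable hcd
  have h : ∫ _ in c..d, 2 * f ((c + d) / 2) ≤ ∫ t in c..d, (f t + f (c + d - t)) :=
    intervalIntegral.integral_mono_on hcd intervalIntegrable_const (hint.add hint.comp_add_sub)
      fun t ht ↦ hf.two_mul_map_midpoint_le_add_reflect ht
  rw [intervalIntegral.integral_const, intervalIntegral.integral_add_comp_add_sub hint] at h
  simp only [smul_eq_mul] at h
  linarith

theorem integral_le_mul_add (hf : ConvexOn ℝ (Icc c d) f) (hcd : c ≤ d) :
    ∫ t in c..d, f t ≤ (d - c) / 2 * (f c + f d) := by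
  have hint := hf.intervalIntegrable hcd
  have h : ∫ t in c..d, (f t + f (c + d - t)) ≤ ∫ _ in c..d, (f c + f d) :=
    intervalIntegral.integral_mono_on hcd (hint.add hint.comp_add_sub) intervalIntegrable_const
      fun t ht ↦ hf.add_reflect_le_add ht
  rw [intervalIntegral.integral_const, intervalIntegral.integral_add_comp_add_sub hint] at h
  simp only [smul_eq_mul] at h
  linarith

end ConvexOn

theorem hermite_hadamard_n2
    (a b : ℝ) (hab : a < b) (f : ℝ → ℝ)
    (hf : ConvexOn ℝ (Set.Icc a b) f) :
    (b - a) / 2 * (f ((3 * a + b) / 4) + f ((a + 3 * b) / 4)) ≤ (∫ t in a..b, f t) ∧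
    (∫ t in a..b, f t) ≤ (b - a) / 4 * (f a + 2 * f ((a + b) / 2) + f b) := by
  set m := (a + b) / 2 with hm
  have ham : a ≤ m := by linarith
  have hmb : m ≤ b := by linarith
  have hf₁ : ConvexOn ℝ (Icc a m) f := hf.subset (Icc_subset_Icc_right hmb) (convex_Icc a m)
  have hf₂ : ConvexOn ℝ (Icc m b) f := hf.subset (Icc_subset_Icc_left ham) (convex_Icc m b)
  rw [← intervalIntegral.integral_add_adjacent_intervals (hf₁.intervalIntegrable ham)
    (hf₂.intervalIntegrable hmb)]
  have hL₁ := hf₁.mul_map_midpoint_le_integral ham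
  have hL₂ := hf₂.mul_map_midpoint_le_integral hmb
  have hR₁ := hf₁.integral_le_mul_add ham
  have hR₂ := hf₂.integral_le_mul_add hmb
  have hma : m - a = (b - a) / 2 := by rw [hm]; ring
  have hbm : b - m = (b - a) / 2 := by rw [hm]; ring
  rw [hma, show (a + m) / 2 = (3 * a + b) / 4 by rw [hm]; ring] at hL₁
  rw [hbm, show (m + b) / 2 = (a + 3 * b) / 4 by rw [hm]; ring] at hL₂
  rw [hma] at hR₁
  rw [hbm] at hR₂
  constructor <;> linarith
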